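/- For any complex coefficients α₀,...,α_{2ⁿ−2}, the vector (|01⟩+|10⟩)^{⊗n} + Σ_{i=0}^{2ⁿ−2} α_i φ_i has Schmidt rank (matrix rank of the associated bipartite coefficient matrix) exactly 2ⁿ, where {φ_i : 0 ≤ i ≤ 2ⁿ−1} is an enumeration of the set {|00⟩, |01⟩+|10⟩}^{⊗n} with φ_{2ⁿ−1} = (|01⟩+|10⟩)^{⊗n}. -/

import Mathlib

open TensorProduct

/-- Schmidt rank of a bipartite vector: minimal number of product vectors
summing to it (equal to the rank of the coefficient matrix in finite dimension). -/
noncomputable def sRank {B C : Type*} [AddCommGroup B] [Module ℂ B]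
    [AddCommGroup C] [Module ℂ C] (ψ : B ⊗[ℂ] C) : ℕ :=
  sInf {r | ∃ (b : Fin r → B) (c : Fin r → C), ψ = ∑ i, b i ⊗ₜ[ℂ] c i}

/-- `(ℂ²)^{⊗n}`, as functions on `n`-bit strings. -/
abbrev V (n : ℕ) : Type := (Fin n → Bool) → ℂ

noncomputable def qb {n : ℕ} (s : Fin n → Bool) : V n := Pi.single s 1

/-- `φ S = ⊗ₖ (if S k then |01⟩+|10⟩ else |00⟩)`, regrouped with party B
holding the first qubit of each factor and party C the second. -/
noncomputable def phi (n : ℕ) (S : Fin n → Bool) : V n ⊗[ℂ] V n :=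
  ∑ g : Fin n → Bool,
    if ∀ k, S k = false → g k = false then
      qb (fun k => S k && g k) ⊗ₜ[ℂ] qb (fun k => S k && !g k)
    else 0

/-!
Read the perturbed vector as the matrix of its coefficients in the computational bases. Only
`φ_S` with `S = a ⊔ b` contributes to entry `(a, b)`, and only when `a, b` are disjoint, so
after reindexing the columns by complementation, `b ↦ bᶜ`, the matrix vanishes unless `a ≤ b`
and carries the unperturbed coefficient `1` on the diagonal. Being unitriangular for the
pointwise order, it has full rank `2ⁿ`, which bounds the Schmidt rank from below; the bound
from above is the dimension of one factor.
-/

theorem Matrix.det_eq_prod_diag_of_apply_ne_zero_le {m R : Type*} [Fintype m] [DecidableEq m]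
    [PartialOrder m] [CommRing R] (M : Matrix m m R) (h : ∀ i j, M i j ≠ 0 → i ≤ j) :
    M.det = ∏ i, M i i := by
  let _ : Fintype (LinearExtension m) := ‹Fintype m›
  let _ : DecidableEq (LinearExtension m) := ‹DecidableEq m›
  let M' : Matrix (LinearExtension m) (LinearExtension m) R := M
  have hM' : M'.IsUpperTriangular := fun i j hji =>
    by_contra fun hij => (toLinearExtension.monotone (h i j hij)).not_gt hji
  exact (det_of_isUpperTriangular hM' :)

theorem Matrix.rank_eq_card_of_apply_ne_zero_le {m K : Type*} [Fintype m] [DecidableEq m]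
    [PartialOrder m] [Field K] (M : Matrix m m K) (h : ∀ i j, M i j ≠ 0 → i ≤ j)
    (hdiag : ∀ i, M i i ≠ 0) : M.rank = Fintype.card m := by
  refine M.rank_of_isUnit ((isUnit_iff_isUnit_det M).2 (isUnit_iff_ne_zero.2 ?_))
  rw [M.det_eq_prod_diag_of_apply_ne_zero_le h]
  exact Finset.prod_ne_zero_iff.2 fun i _ => hdiag i

noncomputable def coeffMatrix (R : Type*) {ι κ : Type*} [CommSemiring R] :
    (ι → R) ⊗[R] (κ → R) →ₗ[R] Matrix ι κ R :=
  TensorProduct.lift (vecMulVecBilin R R)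

@[simp] theorem coeffMatrix_tmul {R ι κ : Type*} [CommSemiring R] (v : ι → R) (w : κ → R) :
    coeffMatrix R (v ⊗ₜ w) = Matrix.vecMulVec v w := rfl

section SchmidtRank

variable {B C : Type*} [AddCommGroup B] [Module ℂ B] [AddCommGroup C] [Module ℂ C]

theorem sRank_le_of_eq_sum {ψ : B ⊗[ℂ] C} {r : ℕ} (b : Fin r → B) (c : Fin r → C)
    (h : ψ = ∑ i, b i ⊗ₜ c i) : sRank ψ ≤ r :=
  Nat.sInf_le ⟨b, c, h⟩

theorem exists_eq_sum_of_sRank (ψ : B ⊗[ℂ] C) :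
    ∃ (b : Fin (sRank ψ) → B) (c : Fin (sRank ψ) → C), ψ = ∑ i, b i ⊗ₜ c i :=
  Nat.sInf_mem (TensorProduct.exists_sum_tmul_eq ψ)

theorem sRank_le_finrank_left [FiniteDimensional ℂ B] (ψ : B ⊗[ℂ] C) :
    sRank ψ ≤ Module.finrank ℂ B := by
  obtain ⟨c, hc⟩ := TensorProduct.eq_repr_basis_left (Module.finBasis ℂ B) ψ
  exact sRank_le_of_eq_sum _ c (by rw [← hc, Finsupp.sum_fintype _ _ (by simp)])

end SchmidtRank

theorem rank_coeffMatrix_le_sRank {ι κ : Type*} [Fintype κ] (ψ : (ι → ℂ) ⊗[ℂ] (κ → ℂ)) :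
    (coeffMatrix ℂ ψ).rank ≤ sRank ψ := by
  obtain ⟨b, c, hψ⟩ := exists_eq_sum_of_sRank ψ
  have hfactor : coeffMatrix ℂ ψ = Matrix.of (fun a i => b i a) * Matrix.of c := by
    ext a k
    simp [hψ, Matrix.mul_apply, Matrix.sum_apply, Matrix.vecMulVec_apply]
  calc (coeffMatrix ℂ ψ).rank ≤ (Matrix.of fun a i => b i a).rank := by
        rw [hfactor]; exact Matrix.rank_mul_le_left _ _
    _ ≤ sRank ψ := (Matrix.rank_le_card_width _).trans_eq (Fintype.card_fin _)

open scoped Classical in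
theorem phi_eq_sum (n : ℕ) (S : Fin n → Bool) :
    phi n S = ∑ g, if g ≤ S then qb g ⊗ₜ qb (S \ g) else 0 := by
  refine Finset.sum_congr rfl fun g _ => ?_
  have hle : (∀ k, S k = false → g k = false) ↔ g ≤ S :=
    forall_congr' fun k => by cases S k <;> cases g k <;> simp
  by_cases hg : g ≤ S
  · rw [if_pos (hle.2 hg), if_pos hg]
    exact congrArg (qb · ⊗ₜ qb (S \ g)) (inf_eq_right.2 hg)
  · rw [if_neg (mt hle.1 hg), if_neg hg]

open scoped Classical in
theorem coeffMatrix_phi_apply (n : ℕ) (S a b : Fin n → Bool) :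
    coeffMatrix ℂ (phi n S) a b = if Disjoint a b ∧ a ⊔ b = S then 1 else 0 := by
  have hiff : Disjoint a b ∧ a ⊔ b = S ↔ a ≤ S ∧ b = S \ a := by
    constructor
    · rintro ⟨hab, rfl⟩
      exact ⟨le_sup_left, hab.sup_sdiff_cancel_left.symm⟩
    · rintro ⟨haS, rfl⟩
      exact ⟨disjoint_sdiff_self_right, sup_sdiff_cancel_right haS⟩
  have hterm (g : Fin n → Bool) :
      coeffMatrix ℂ (if g ≤ S then qb g ⊗ₜ qb (S \ g) else 0) a b =
        if a = g then (if a ≤ S ∧ b = S \ a then 1 else 0) else 0 := by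
    split_ifs <;> simp_all [qb, Matrix.vecMulVec_apply, Pi.single_apply]
  simp only [hiff]
  rw [phi_eq_sum, map_sum, Matrix.sum_apply, Finset.sum_congr rfl fun g _ => hterm g,
    Finset.sum_ite_eq, if_pos (Finset.mem_univ a)]

noncomputable def perturbed (n : ℕ) (α : (Fin n → Bool) → ℂ) : V n ⊗[ℂ] V n :=
  phi n ⊤ + ∑ S ∈ Finset.univ.erase ⊤, α S • phi n S

theorem coeffMatrix_perturbed_apply_of_not_disjoint {n : ℕ} (α : (Fin n → Bool) → ℂ)
    {a b : Fin n → Bool} (hab : ¬Disjoint a b) : coeffMatrix ℂ (perturbed n α) a b = 0 := by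
  simp [perturbed, Matrix.sum_apply, coeffMatrix_phi_apply, hab]

theorem coeffMatrix_perturbed_apply_compl {n : ℕ} (α : (Fin n → Bool) → ℂ) (a : Fin n → Bool) :
    coeffMatrix ℂ (perturbed n α) a aᶜ = 1 := by
  simp [perturbed, Matrix.sum_apply, coeffMatrix_phi_apply, disjoint_compl_right]

theorem rank_coeffMatrix_perturbed (n : ℕ) (α : (Fin n → Bool) → ℂ) :
    (coeffMatrix ℂ (perturbed n α)).rank = 2 ^ n := by
  have hcard : Fintype.card (Fin n → Bool) = 2 ^ n := by simp
  rw [← hcard, ← Matrix.rank_submatrix _ (Equiv.refl _) (compl_involutive.toPerm _)]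
  refine Matrix.rank_eq_card_of_apply_ne_zero_le _ (fun a b hab => ?_) fun a => ?_
  · by_contra hle
    exact hab (coeffMatrix_perturbed_apply_of_not_disjoint α (mt disjoint_compl_right_iff.1 hle))
  · simp [coeffMatrix_perturbed_apply_compl]

theorem schmidt_rank_perturbed (n : ℕ) (α : (Fin n → Bool) → ℂ) :
    sRank (phi n (fun _ => true) +
      ∑ S ∈ Finset.univ.erase (fun _ => true), α S • phi n S) = 2 ^ n := by
  change sRank (perturbed n α) = 2 ^ n
  refine le_antisymm ?_ ?_
  · simpa using sRank_le_finrank_left (perturbed n α)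
  · calc 2 ^ n = (coeffMatrix ℂ (perturbed n α)).rank := (rank_coeffMatrix_perturbed n α).symm
      _ ≤ sRank (perturbed n α) := rank_coeffMatrix_le_sRank _
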